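/- The ℂ-algebra ℂ[y₁,y₂,y₃]/(3y₁²y₂ + y₃², y₁³ + 3y₂², y₁y₃), the Jacobian algebra of x³y + y³ + xz², has ℂ-dimension 11. -/

import Mathlib

/-!
Write `x, y, z` for the classes of the variables. Modulo the Jacobian ideal
`z³ = y²z = y³ = 0`, `x³ = -3y²` and `x²y = -z²/3`, so the span of the eleven monomials
`1, x, y, z, x², xy, y², yz, z², xy², yz²` is stable under multiplication by `x, y, z`, hence is
everything. Conversely the algebra is Gorenstein with socle spanned by `yz²`: the functional `φ`
reading off the coefficient of `yz²` in the normal form vanishes on the ideal, and `φ(uv)` is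
nonzero for the `i`-th and `(10 - i)`-th monomial of that list and zero for any other pair, so the
eleven monomials are linearly independent.
-/

open MvPolynomial

noncomputable section

abbrev R3 : Type := MvPolynomial (Fin 3) ℂ

/-- The Jacobian ideal of the `Q₁₁` polynomial `x³y + y³ + xz²`
(after removing harmless scalar factors): `3y₁²y₂ + y₃²`, `y₁³ + 3y₂²`, `y₁y₃`. -/
def J8 : Ideal R3 :=
  Ideal.span {3 * X 0 ^ 2 * X 1 + X 2 ^ 2, X 0 ^ 3 + 3 * X 1 ^ 2, X 0 * X 2}

theorem linearIndependent_of_biorthogonal {K M ι : Type*} [CommRing K] [NoZeroDivisors K]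
    [AddCommGroup M] [Module K M] {b : ι → M} (f : ι → Module.Dual K M)
    (hdiag : ∀ i, f i (b i) ≠ 0) (hoff : ∀ i j, i ≠ j → f i (b j) = 0) :
    LinearIndependent K b := by
  rw [linearIndependent_iff']
  intro s g hs i hi
  have hsum : ∑ j ∈ s, g j * f i (b j) = g i * f i (b i) :=
    Finset.sum_eq_single_of_mem i hi fun j _ hji => by rw [hoff i j hji.symm, mul_zero]
  have : g i * f i (b i) = 0 := by
    simpa [hsum] using congrArg (f i) hs
  exact (mul_eq_zero.mp this).resolve_right (hdiag i)

theorem Submodule.eq_top_of_one_mem_of_mul_mem {R A : Type*} [CommSemiring R] [Semiring A]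
    [Algebra R A] {s : Set A} (hs : Algebra.adjoin R s = ⊤) {S : Submodule R A} (hone : 1 ∈ S)
    (hmul : ∀ v ∈ S, ∀ a ∈ s, v * a ∈ S) : S = ⊤ := by
  refine eq_top_iff'.mpr fun p => ?_
  have hp : p ∈ Algebra.adjoin R s := hs ▸ Algebra.mem_top
  suffices ∀ v ∈ S, v * p ∈ S by simpa using this 1 hone
  induction hp using Algebra.adjoin_induction with
  | mem a ha => exact fun v hv => hmul v hv a ha
  | algebraMap r =>
    exact fun v hv => by rw [← Algebra.commutes, ← Algebra.smul_def]; exact S.smul_mem r hv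
  | add a b _ _ ha hb => exact fun v hv => by rw [mul_add]; exact add_mem (ha v hv) (hb v hv)
  | mul a b _ _ ha hb => exact fun v hv => by rw [← mul_assoc]; exact hb _ (ha v hv)

theorem Ideal.apply_eq_zero_of_mem_span {R M F : Type*} [CommSemiring R] [AddCommMonoid M]
    [FunLike F R M] [AddMonoidHomClass F R M] (L : F) {s : Set R}
    (hs : ∀ g ∈ s, ∀ r, L (r * g) = 0) {p : R} (hp : p ∈ Ideal.span s) : L p = 0 := by
  suffices ∀ r, L (r * p) = 0 by simpa using this 1
  induction hp using Submodule.span_induction with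
  | mem g hg => exact hs g hg
  | zero => simp
  | add a b _ _ ha hb => exact fun r => by rw [mul_add, map_add, ha, hb, add_zero]
  | smul a b _ hb => exact fun r => by rw [smul_eq_mul, ← mul_assoc]; exact hb (r * a)

section ThreeVariables

variable {A : Type*} [CommSemiring A]

def mon3 (x y z : A) (t : ℕ × ℕ × ℕ) : A := x ^ t.1 * y ^ t.2.1 * z ^ t.2.2

def unitExp : Fin 3 → ℕ × ℕ × ℕ := ![(1, 0, 0), (0, 1, 0), (0, 0, 1)]

lemma mon3_add (x y z : A) (s t : ℕ × ℕ × ℕ) :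
    mon3 x y z (s + t) = mon3 x y z s * mon3 x y z t := by
  simp only [mon3, Prod.fst_add, Prod.snd_add, pow_add]; ring

lemma mon3_add_unitExp (x y z : A) (t : ℕ × ℕ × ℕ) (k : Fin 3) :
    mon3 x y z (t + unitExp k) = mon3 x y z t * ![x, y, z] k := by
  rw [mon3_add]; fin_cases k <;> simp [mon3, unitExp]

lemma mon3_eq_zero_of_le {x y z : A} {s t : ℕ × ℕ × ℕ} (hs : mon3 x y z s = 0) (hst : s ≤ t) :
    mon3 x y z t = 0 := by
  obtain ⟨u, rfl⟩ := exists_add_of_le hst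
  rw [mon3_add, hs, zero_mul]

lemma map_mon3 {B F : Type*} [CommSemiring B] [FunLike F A B] [RingHomClass F A B] (f : F)
    (x y z : A) (t : ℕ × ℕ × ℕ) : f (mon3 x y z t) = mon3 (f x) (f y) (f z) t := by
  simp [mon3]

end ThreeVariables

def q11Exps : Fin 11 → ℕ × ℕ × ℕ :=
  ![(0, 0, 0), (1, 0, 0), (0, 1, 0), (0, 0, 1), (2, 0, 0), (1, 1, 0), (0, 2, 0), (0, 1, 1),
    (0, 0, 2), (1, 2, 0), (0, 1, 2)]

def q11Family {A : Type*} [CommSemiring A] (x y z : A) (j : Fin 11) : A :=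
  mon3 x y z (q11Exps j)

lemma q11Exps_add_unitExp_cases (j : Fin 11) (k : Fin 3) :
    (∃ j', q11Exps j' = q11Exps j + unitExp k) ∨ (1, 0, 1) ≤ q11Exps j + unitExp k ∨
      (0, 0, 3) ≤ q11Exps j + unitExp k ∨ (0, 2, 1) ≤ q11Exps j + unitExp k ∨
      (0, 3, 0) ≤ q11Exps j + unitExp k ∨ q11Exps j + unitExp k = (3, 0, 0) ∨
      q11Exps j + unitExp k = (2, 1, 0) ∨ q11Exps j + unitExp k = (2, 2, 0) := by
  revert j k; decide

lemma q11Exps_rev_add_self (i : Fin 11) :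
    q11Exps i.rev + q11Exps i = (0, 1, 2) ∨ q11Exps i.rev + q11Exps i = (2, 2, 0) := by
  revert i; decide

lemma q11Exps_rev_add_of_ne {i j : Fin 11} (hij : i ≠ j) :
    q11Exps i.rev + q11Exps j ∉ ({(0, 1, 2), (2, 2, 0), (5, 0, 0)} : Finset (ℕ × ℕ × ℕ)) := by
  revert i j; decide

lemma z_pow_three_eq_zero {A : Type*} [CommRing A] {x y z : A} (h1 : 3 * x ^ 2 * y + z ^ 2 = 0)
    (h3 : x * z = 0) : z ^ 3 = 0 := by
  linear_combination z * h1 - 3 * x * y * h3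

section Spanning

variable {A : Type*} [CommRing A] [Algebra ℂ A] {x y z : A}

variable (A) in
lemma three_mul_algebraMap_inv_three : (3 : A) * algebraMap ℂ A 3⁻¹ = 1 := by
  rw [← map_ofNat (algebraMap ℂ A) 3, ← map_mul, mul_inv_cancel₀ three_ne_zero, map_one]

lemma y_sq_mul_z_eq_zero (h2 : x ^ 3 + 3 * y ^ 2 = 0) (h3 : x * z = 0) : y ^ 2 * z = 0 := by
  linear_combination algebraMap ℂ A 3⁻¹ * (z * h2 - x ^ 2 * h3) -
    y ^ 2 * z * three_mul_algebraMap_inv_three A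

lemma y_pow_three_eq_zero (h1 : 3 * x ^ 2 * y + z ^ 2 = 0) (h2 : x ^ 3 + 3 * y ^ 2 = 0)
    (h3 : x * z = 0) : y ^ 3 = 0 := by
  linear_combination algebraMap ℂ A 3⁻¹ ^ 2 * (3 * y * h2 - x * h1 + z * h3) -
    y ^ 3 * (3 * algebraMap ℂ A 3⁻¹ + 1) * three_mul_algebraMap_inv_three A

lemma x_pow_three_eq_smul (h2 : x ^ 3 + 3 * y ^ 2 = 0) : x ^ 3 = (-3 : ℂ) • y ^ 2 := by
  rw [neg_smul, ofNat_smul_eq_nsmul]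
  linear_combination h2

lemma x_sq_mul_y_eq_smul (h1 : 3 * x ^ 2 * y + z ^ 2 = 0) : x ^ 2 * y = (-3⁻¹ : ℂ) • z ^ 2 := by
  rw [Algebra.smul_def, map_neg]
  linear_combination algebraMap ℂ A 3⁻¹ * h1 - x ^ 2 * y * three_mul_algebraMap_inv_three A

lemma mon3_add_unitExp_mem_span (h1 : 3 * x ^ 2 * y + z ^ 2 = 0) (h2 : x ^ 3 + 3 * y ^ 2 = 0)
    (h3 : x * z = 0) (j : Fin 11) (k : Fin 3) :
    mon3 x y z (q11Exps j + unitExp k) ∈ Submodule.span ℂ (Set.range (q11Family x y z)) := by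
  set S := Submodule.span ℂ (Set.range (q11Family x y z))
  have mem (j' : Fin 11) : mon3 x y z (q11Exps j') ∈ S := Submodule.subset_span ⟨j', rfl⟩
  have mem_of_le {s : ℕ × ℕ × ℕ} (hs : mon3 x y z s = 0) (hst : s ≤ q11Exps j + unitExp k) :
      mon3 x y z (q11Exps j + unitExp k) ∈ S := by
    rw [mon3_eq_zero_of_le hs hst]; exact S.zero_mem
  rcases q11Exps_add_unitExp_cases j k with ⟨j', hj'⟩ | h | h | h | h | h | h | h
  · exact hj' ▸ mem j'
  · exact mem_of_le (s := (1, 0, 1)) (by simp [mon3, h3]) h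
  · exact mem_of_le (s := (0, 0, 3)) (by simp [mon3, z_pow_three_eq_zero h1 h3]) h
  · exact mem_of_le (s := (0, 2, 1)) (by simp [mon3, y_sq_mul_z_eq_zero h2 h3]) h
  · exact mem_of_le (s := (0, 3, 0)) (by simp [mon3, y_pow_three_eq_zero h1 h2 h3]) h
  · rw [h]; simpa [mon3, q11Exps, x_pow_three_eq_smul h2] using mem 6
  · rw [h]; simpa [mon3, q11Exps, x_sq_mul_y_eq_smul h1] using mem 8
  · rw [h, show mon3 x y z (2, 2, 0) = y * (x ^ 2 * y) by simp only [mon3]; ring,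
      x_sq_mul_y_eq_smul h1, mul_smul_comm]
    simpa [mon3, q11Exps] using mem 10

theorem span_q11Family_eq_top (h1 : 3 * x ^ 2 * y + z ^ 2 = 0) (h2 : x ^ 3 + 3 * y ^ 2 = 0)
    (h3 : x * z = 0) (hgen : Algebra.adjoin ℂ (Set.range ![x, y, z]) = ⊤) :
    Submodule.span ℂ (Set.range (q11Family x y z)) = ⊤ := by
  refine Submodule.eq_top_of_one_mem_of_mul_mem hgen
    (Submodule.subset_span ⟨0, by simp [q11Family, q11Exps, mon3]⟩) ?_
  rintro v hv _ ⟨k, rfl⟩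
  set S := Submodule.span ℂ (Set.range (q11Family x y z))
  have hle : S ≤ S.comap (LinearMap.mulRight ℂ (![x, y, z] k)) :=
    Submodule.span_le.mpr <| Set.range_subset_iff.mpr fun j => by
      simpa [q11Family, mon3_add_unitExp] using mon3_add_unitExp_mem_span h1 h2 h3 j k
  exact hle hv

end Spanning

def monExp (t : ℕ × ℕ × ℕ) : Fin 3 →₀ ℕ :=
  Finsupp.single 0 t.1 + Finsupp.single 1 t.2.1 + Finsupp.single 2 t.2.2

lemma monExp_apply (t : ℕ × ℕ × ℕ) : ⇑(monExp t) = ![t.1, t.2.1, t.2.2] := by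
  ext i; fin_cases i <;> simp [monExp]

lemma monExp_injective : Function.Injective monExp := fun s t h => by
  simpa [monExp_apply, Prod.ext_iff] using congrArg DFunLike.coe h

lemma monExp_le_monExp {s t : ℕ × ℕ × ℕ} : monExp s ≤ monExp t ↔ s ≤ t := by
  simp [Finsupp.le_def, Fin.forall_fin_succ, monExp_apply, Prod.le_def]

lemma monExp_sub (s t : ℕ × ℕ × ℕ) : monExp t - monExp s = monExp (t - s) := by
  ext i; fin_cases i <;> simp [monExp_apply]

lemma mon3_X {R : Type*} [CommSemiring R] (t : ℕ × ℕ × ℕ) :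
    mon3 (X 0 : MvPolynomial (Fin 3) R) (X 1) (X 2) t = monomial (monExp t) 1 := by
  simp [mon3, monExp, X_pow_eq_monomial, monomial_mul]

-- Modulo `J8`, `x²y² ≡ -yz²/3` and `x⁵ ≡ yz²`; with `yz²` these are all monomials of weighted
-- degree `10/9` for the weights `(2/9, 1/3, 7/18)` that make `x³y + y³ + xz²` homogeneous.
def q11Socle : R3 →ₗ[ℂ] ℂ :=
  lcoeff ℂ (monExp (0, 1, 2)) - (3⁻¹ : ℂ) • lcoeff ℂ (monExp (2, 2, 0)) +
    lcoeff ℂ (monExp (5, 0, 0))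

lemma q11Socle_monomial (t : ℕ × ℕ × ℕ) (a : ℂ) :
    q11Socle (monomial (monExp t) a) =
      a * ((if t = (0, 1, 2) then 1 else 0) - 3⁻¹ * (if t = (2, 2, 0) then 1 else 0) +
        if t = (5, 0, 0) then 1 else 0) := by
  simp only [q11Socle, LinearMap.add_apply, LinearMap.sub_apply, LinearMap.smul_apply,
    lcoeff_apply, coeff_monomial, monExp_injective.eq_iff, smul_eq_mul]
  split_ifs <;> ring

lemma q11Socle_mul_monomial (r : R3) (u : ℕ × ℕ × ℕ) (a : ℂ) :
    q11Socle (r * monomial (monExp u) a) =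
      ((if u ≤ (0, 1, 2) then coeff (monExp ((0, 1, 2) - u)) r else 0) -
        3⁻¹ * (if u ≤ (2, 2, 0) then coeff (monExp ((2, 2, 0) - u)) r else 0) +
        if u ≤ (5, 0, 0) then coeff (monExp ((5, 0, 0) - u)) r else 0) * a := by
  simp only [q11Socle, LinearMap.add_apply, LinearMap.sub_apply, LinearMap.smul_apply, lcoeff_apply,
    coeff_mul_monomial', monExp_le_monExp, monExp_sub, smul_eq_mul]
  split_ifs <;> ring

lemma J8_eq_span_monomials : J8 = Ideal.span
    {monomial (monExp (2, 1, 0)) 3 + monomial (monExp (0, 0, 2)) 1,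
      monomial (monExp (3, 0, 0)) 1 + monomial (monExp (0, 2, 0)) 3,
      monomial (monExp (1, 0, 1)) 1} := by
  have hC (t : ℕ × ℕ × ℕ) (a : ℂ) :
      monomial (monExp t) a = C a * mon3 (X 0 : R3) (X 1) (X 2) t := by
    rw [mon3_X, C_mul_monomial, mul_one]
  simp only [hC, mon3, map_one, map_ofNat]
  rw [J8]; ring_nf

lemma q11Socle_eq_zero_of_mem {p : R3} (hp : p ∈ J8) : q11Socle p = 0 := by
  rw [J8_eq_span_monomials] at hp
  refine Ideal.apply_eq_zero_of_mem_span q11Socle ?_ hp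
  rintro g (rfl | rfl | rfl) r <;>
    simp only [mul_add, map_add, q11Socle_mul_monomial] <;> norm_num <;> ring

def q11SocleQuot : (R3 ⧸ J8) →ₗ[ℂ] ℂ :=
  (J8.restrictScalars ℂ).liftQ q11Socle (fun _ hp => q11Socle_eq_zero_of_mem hp) ∘ₗ
    (Submodule.Quotient.restrictScalarsEquiv ℂ J8).symm.toLinearMap

lemma q11SocleQuot_mk (p : R3) : q11SocleQuot (Ideal.Quotient.mk J8 p) = q11Socle p := rfl

def q11QuotFamily : Fin 11 → R3 ⧸ J8 :=
  q11Family (Ideal.Quotient.mk J8 (X 0)) (Ideal.Quotient.mk J8 (X 1)) (Ideal.Quotient.mk J8 (X 2))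

lemma q11SocleQuot_mul (i j : Fin 11) :
    q11SocleQuot (q11QuotFamily i * q11QuotFamily j) =
      q11Socle (monomial (monExp (q11Exps i + q11Exps j)) 1) := by
  rw [q11QuotFamily, q11Family, q11Family, ← mon3_add, ← map_mon3, q11SocleQuot_mk, mon3_X]

theorem linearIndependent_q11QuotFamily : LinearIndependent ℂ q11QuotFamily := by
  refine linearIndependent_of_biorthogonal
    (fun i => q11SocleQuot ∘ₗ LinearMap.mulLeft ℂ (q11QuotFamily i.rev)) (fun i => ?_) ?_
  · rcases q11Exps_rev_add_self i with h | h <;>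
      simp [q11SocleQuot_mul, h, q11Socle_monomial]
  · intro i j hij
    have := q11Exps_rev_add_of_ne hij
    simp only [Finset.mem_insert, Finset.mem_singleton, not_or] at this
    simp [q11SocleQuot_mul, q11Socle_monomial, this]

theorem span_q11QuotFamily_eq_top : Submodule.span ℂ (Set.range q11QuotFamily) = ⊤ := by
  refine span_q11Family_eq_top ?_ ?_ ?_ ?_
  · have h : (3 * X 0 ^ 2 * X 1 + X 2 ^ 2 : R3) ∈ J8 := Ideal.subset_span (by simp)
    simpa only [map_add, map_mul, map_pow, map_ofNat] using Ideal.Quotient.eq_zero_iff_mem.mpr h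
  · have h : (X 0 ^ 3 + 3 * X 1 ^ 2 : R3) ∈ J8 := Ideal.subset_span (by simp)
    simpa only [map_add, map_mul, map_pow, map_ofNat] using Ideal.Quotient.eq_zero_iff_mem.mpr h
  · have h : (X 0 * X 2 : R3) ∈ J8 := Ideal.subset_span (by simp)
    simpa only [map_mul] using Ideal.Quotient.eq_zero_iff_mem.mpr h
  · have : ![Ideal.Quotient.mk J8 (X 0), Ideal.Quotient.mk J8 (X 1), Ideal.Quotient.mk J8 (X 2)] =
        Ideal.Quotient.mkₐ ℂ J8 ∘ X := by
      ext k; fin_cases k <;> rfl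
    rw [this, Set.range_comp, Algebra.adjoin_image, adjoin_range_X, Algebra.map_top,
      AlgHom.range_eq_top]
    exact Ideal.Quotient.mkₐ_surjective ℂ J8

/-- The Jacobian algebra of `x³y + y³ + xz²` has `ℂ`-dimension `11`. -/
theorem stmt8 : Module.finrank ℂ (R3 ⧸ J8) = 11 := by
  have b := Module.Basis.mk linearIndependent_q11QuotFamily span_q11QuotFamily_eq_top.ge
  rw [Module.finrank_eq_card_basis b, Fintype.card_fin]
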